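/- Let p ≥ 1, let φ_1, …, φ_p ∈ ℝ, and let γ : ℤ → ℝ be even and satisfy γ(h) = Σ_{j=1}^p φ_j γ(h−j) for h = 1 and h = 2. Define γ_d(h) = 2γ(h) − γ(h+1) − γ(h−1), assume γ_d(0) ≠ 0, and set ρ_d(h) = γ_d(h)/γ_d(0). Then ρ_d(1) + 1/2 = φ_1/2 − φ_2/2 − φ_3·[1/2 + ρ_d(1)] − ⋯ − φ_p·[1/2 + ρ_d(1) + ⋯ + ρ_d(p−2)], i.e., ρ_d(1) + 1/2 = φ_1/2 − Σ_{j=2}^p φ_j·(1/2 + Σ_{ℓ=1}^{j−2} ρ_d(ℓ)), where the inner sum is empty when j = 2. -/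

import Mathlib

/-!
Since `γ` is even, `γd 0 = 2 (γ 0 - γ 1)`, and `γd ℓ` is minus the second difference of `γ`,
so its partial sums telescope: `1/2 + ρd 1 + ⋯ + ρd (j-2) = (γ (j-2) - γ (j-1)) / γd 0` and
`ρd 1 + 1/2 = (γ 1 - γ 2) / γd 0`. Subtracting the Yule–Walker equations at lags 1 and 2 and
using evenness once more gives
`γ 1 - γ 2 = φ 1 (γ 0 - γ 1) - ∑_{j ≥ 2} φ j (γ (j-2) - γ (j-1))`; divide by `γd 0`.
-/

open Finset

theorem Int.sum_Icc_one_sub_pred {M : Type*} [AddCommGroup M] (g : ℤ → M) {m : ℤ} (hm : 0 ≤ m) :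
    ∑ ℓ ∈ Icc 1 m, (g ℓ - g (ℓ - 1)) = g m - g 0 := by
  induction m, hm using Int.leInduction with
  | base => simp
  | succ n hn ih =>
    rw [← insert_Icc_right_eq_Icc_add_one (by omega), sum_insert (by simp), ih,
      add_sub_cancel_right]
    abel

theorem sum_Icc_one_eq_add_sum_Icc_two {M : Type*} [AddCommMonoid M] (f : ℕ → M) {p : ℕ}
    (hp : 1 ≤ p) : ∑ j ∈ Icc 1 p, f j = f 1 + ∑ j ∈ Icc 2 p, f j := by
  rw [← insert_Icc_add_one_left_eq_Icc hp, sum_insert (by simp)]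
  rfl

def diffAutocov (γ : ℤ → ℝ) (h : ℤ) : ℝ := 2 * γ h - γ (h + 1) - γ (h - 1)

noncomputable def diffAutocorr (γ : ℤ → ℝ) (h : ℤ) : ℝ := diffAutocov γ h / diffAutocov γ 0

theorem sum_Icc_diffAutocov (γ : ℤ → ℝ) {m : ℤ} (hm : 0 ≤ m) :
    ∑ ℓ ∈ Icc 1 m, diffAutocov γ ℓ = (γ 1 - γ 0) - (γ (m + 1) - γ m) := by
  have htel := Int.sum_Icc_one_sub_pred (fun ℓ => γ (ℓ + 1) - γ ℓ) hm
  simp only [sub_add_cancel, zero_add] at htel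
  rw [← neg_sub, ← htel, ← sum_neg_distrib]
  refine sum_congr rfl fun ℓ _ => ?_
  rw [diffAutocov]
  ring

section

variable {γ : ℤ → ℝ}

theorem diffAutocov_zero (heven : ∀ h, γ (-h) = γ h) : diffAutocov γ 0 = 2 * (γ 0 - γ 1) := by
  have h1 := heven 1
  simp only [diffAutocov, zero_add, zero_sub] at h1 ⊢
  rw [h1]
  ring

theorem half_add_sum_Icc_diffAutocorr (heven : ∀ h, γ (-h) = γ h) (h0 : diffAutocov γ 0 ≠ 0)
    {m : ℤ} (hm : 0 ≤ m) :
    1 / 2 + ∑ ℓ ∈ Icc 1 m, diffAutocorr γ ℓ = (γ m - γ (m + 1)) / diffAutocov γ 0 := by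
  simp only [diffAutocorr]
  rw [← sum_div, sum_Icc_diffAutocov γ hm]
  field_simp
  rw [diffAutocov_zero heven]
  ring

theorem diffAutocorr_one_add_half (heven : ∀ h, γ (-h) = γ h) (h0 : diffAutocov γ 0 ≠ 0) :
    diffAutocorr γ 1 + 1 / 2 = (γ 1 - γ 2) / diffAutocov γ 0 := by
  have h1 : diffAutocov γ 1 = 2 * γ 1 - γ 2 - γ 0 := by norm_num [diffAutocov]
  rw [diffAutocorr, h1]
  field_simp
  rw [diffAutocov_zero heven]
  ring

theorem sum_Icc_one_mul_sub_of_even (heven : ∀ h, γ (-h) = γ h) (φ : ℕ → ℝ) {p : ℕ} (hp : 1 ≤ p) :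
    ∑ j ∈ Icc 1 p, φ j * (γ (1 - j) - γ (2 - j)) =
      φ 1 * (γ 0 - γ 1) - ∑ j ∈ Icc 2 p, φ j * (γ (j - 2) - γ (j - 1)) := by
  rw [sum_Icc_one_eq_add_sum_Icc_two _ hp, sub_eq_add_neg (φ 1 * _), ← sum_neg_distrib]
  congr 1
  refine sum_congr rfl fun j _ => ?_
  rw [← heven (j - 2), ← heven (j - 1)]
  ring_nf

end

/-- If the even function `γ : ℤ → ℝ` satisfies the order-`p` Yule–Walker recursion at lags
`h = 1` and `h = 2`, then the differenced autocorrelations `ρd h = γd h / γd 0` (with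
`γd h = 2 γ h - γ (h+1) - γ (h-1)`, `γd 0 ≠ 0`) satisfy
`ρd 1 + 1/2 = φ 1 / 2 - ∑_{j=2}^p φ j * (1/2 + ∑_{ℓ=1}^{j-2} ρd ℓ)`. -/
theorem diff_autocorr_first_equation (p : ℕ) (hp : 1 ≤ p) (φ : ℕ → ℝ) (γ : ℤ → ℝ)
    (heven : ∀ h : ℤ, γ (-h) = γ h)
    (hYW1 : γ 1 = ∑ j ∈ Finset.Icc 1 p, φ j * γ (1 - (j : ℤ)))
    (hYW2 : γ 2 = ∑ j ∈ Finset.Icc 1 p, φ j * γ (2 - (j : ℤ)))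
    (γd : ℤ → ℝ) (hγd : ∀ h : ℤ, γd h = 2 * γ h - γ (h + 1) - γ (h - 1))
    (h0 : γd 0 ≠ 0)
    (ρd : ℤ → ℝ) (hρd : ∀ h : ℤ, ρd h = γd h / γd 0) :
    ρd 1 + 1 / 2 =
      φ 1 / 2 -
        ∑ j ∈ Finset.Icc 2 p, φ j * (1 / 2 + ∑ ℓ ∈ Finset.Icc (1 : ℤ) ((j : ℤ) - 2), ρd ℓ) := by
  obtain rfl : γd = diffAutocov γ := funext hγd
  obtain rfl : ρd = diffAutocorr γ := funext hρd
  have hYW : γ 1 - γ 2 = φ 1 * (γ 0 - γ 1) - ∑ j ∈ Icc 2 p, φ j * (γ (j - 2) - γ (j - 1)) := by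
    rw [← sum_Icc_one_mul_sub_of_even heven φ hp]
    simp only [mul_sub, sum_sub_distrib, ← hYW1, ← hYW2]
  have hbracket : ∀ j ∈ Icc 2 p, φ j * (1 / 2 + ∑ ℓ ∈ Icc (1 : ℤ) (j - 2), diffAutocorr γ ℓ) =
      φ j * (γ (j - 2) - γ (j - 1)) / diffAutocov γ 0 := fun j hj => by
    rw [half_add_sum_Icc_diffAutocorr heven h0 (by rw [mem_Icc] at hj; omega),
      show (j : ℤ) - 2 + 1 = j - 1 by ring, mul_div_assoc]
  rw [diffAutocorr_one_add_half heven h0, sum_congr rfl hbracket, ← sum_div, hYW]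
  field_simp
  rw [diffAutocov_zero heven]
  ring
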